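/- (Uniform law of large numbers) Let ω_1, ω_2, … be i.i.d. with law P on [0,1]^d, where P has density bounded by B with respect to Lebesgue measure, and let P_n denote the empirical measure. Then sup_{x ∈ D_I^δ} | ∫ g_x dP_n − ∫ g_x dP | → 0 almost surely as n → ∞. -/

import Mathlib

/-!
The family `{g_x : x ∈ D_I^δ}` can be covered, for every `ε > 0`, by finitely many brackets
`[c - h, c + h]` with `∫ h dP ≤ ε`; the strong law applied to the finitely many functions `c`, `h`
then gives the uniform law (the Blum–DeHardt argument).

The brackets come from a finite net of the compact set `D_I^δ`. If every centroid of `x` lies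
within `η` of the corresponding centroid of `y`, the Voronoi indices of `x` and `y` can differ only
at points whose distances to two centroids of `y` differ by at most `2η`; elsewhere
`|g_x - g_y| = O(η)`. Since bisectors are Lebesgue-null and `P` has a density, the `P`-mass of this
near-bisector set tends to `0` with `η`, uniformly on `D_I^δ` by compactness.
-/

open MeasureTheory Finset

noncomputable section

abbrev Eu (d : ℕ) := EuclideanSpace ℝ (Fin d)

def cube (d : ℕ) : Set (Eu d) := {ω | ∀ i, ω i ∈ Set.Icc (0:ℝ) 1}

def vIndex {d : ℕ} {ι : Type*} [Fintype ι] [LinearOrder ι] [Nonempty ι]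
    (x : ι → Eu d) (ω : Eu d) : ι :=
  (Finset.univ.filter fun i => ∀ j, dist (x i) ω ≤ dist (x j) ω).min' (by
    obtain ⟨i, -, hi⟩ := Finset.exists_min_image Finset.univ
      (fun j => dist (x j) ω) ⟨Classical.arbitrary ι, Finset.mem_univ _⟩
    exact ⟨i, Finset.mem_filter.2 ⟨Finset.mem_univ _,
      fun j => hi j (Finset.mem_univ _)⟩⟩)

def vCell {d : ℕ} {ι : Type*} [Fintype ι] [LinearOrder ι] [Nonempty ι]
    (x : ι → Eu d) (i : ι) : Set (Eu d) :=
  {ω ∈ cube d | vIndex x ω = i}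

def sep {d : ℕ} {ι : Type*} (δ : ℝ) : Set (ι → Eu d) :=
  {x | (∀ i, x i ∈ cube d) ∧ ∀ i j, i ≠ j → δ ≤ dist (x i) (x j)}

def gfun {d : ℕ} {ι : Type*} [Fintype ι] [LinearOrder ι] [Nonempty ι]
    (Λ : ι → ι → ℝ) (x : ι → Eu d) (ω : Eu d) : ℝ :=
  ∑ j, Λ (vIndex x ω) j * ‖x j - ω‖ ^ 2

def extVar {d : ℕ} {ι : Type*} [Fintype ι] [LinearOrder ι] [Nonempty ι]
    (Λ : ι → ι → ℝ) (P : Measure (Eu d)) (x : ι → Eu d) : ℝ :=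
  (1/2) * ∑ i, ∑ j, Λ i j * ∫ ω in vCell x i, ‖x j - ω‖ ^ 2 ∂P

open ProbabilityTheory Filter

open scoped ENNReal Topology

def empiricalMean {E : Type*} (f : E → ℝ) (ξ : ℕ → E) (n : ℕ) : ℝ :=
  (1 / (n : ℝ)) * ∑ k ∈ range n, f (ξ k)

theorem abs_empiricalMean_sub_le {E : Type*} {f c h : E → ℝ} {ξ : ℕ → E}
    (hξ : ∀ k, |f (ξ k) - c (ξ k)| ≤ h (ξ k)) (n : ℕ) :
    |empiricalMean f ξ n - empiricalMean c ξ n| ≤ empiricalMean h ξ n := by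
  rw [empiricalMean, empiricalMean, empiricalMean, ← mul_sub, ← sum_sub_distrib, abs_mul,
    abs_of_nonneg (by positivity)]
  gcongr
  exact (abs_sum_le_sum_abs _ _).trans (sum_le_sum fun k _ => hξ k)

section UniformLaw

variable {E : Type*} [MeasurableSpace E] {P : Measure E}

/-- A pair `b = (c, h)` encodes the bracket `[c - h, c + h]`. -/
def IsBracketCover {T : Type*} (P : Measure E) (S : Set E) (f : T → E → ℝ) (ε : ℝ)
    (B : Finset ((E → ℝ) × (E → ℝ))) : Prop :=
  (∀ b ∈ B, Measurable b.1 ∧ Measurable b.2 ∧ Integrable b.1 P ∧ Integrable b.2 P ∧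
      ∫ ω, b.2 ω ∂P ≤ ε) ∧
    ∀ t, ∃ b ∈ B, ∀ ω ∈ S, |f t ω - b.1 ω| ≤ b.2 ω

theorem ae_tendsto_empiricalMean {Ω : Type*} [MeasurableSpace Ω] {μ : Measure Ω}
    {X : ℕ → Ω → E} (hmeas : ∀ n, Measurable (X n)) (hindep : iIndepFun X μ)
    (hlaw : ∀ n, μ.map (X n) = P) {f : E → ℝ} (hf : Measurable f) (hfi : Integrable f P) :
    ∀ᵐ ϖ ∂μ, Tendsto (empiricalMean f fun k => X k ϖ) atTop (𝓝 (∫ ω, f ω ∂P)) := by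
  have hint : Integrable (f ∘ X 0) μ :=
    (integrable_map_measure hf.aestronglyMeasurable (hmeas 0).aemeasurable).1 (hlaw 0 ▸ hfi)
  have hident : ∀ k, IdentDistrib (f ∘ X k) (f ∘ X 0) μ μ := fun k =>
    (IdentDistrib.mk (hmeas k).aemeasurable (hmeas 0).aemeasurable (by rw [hlaw, hlaw])).comp hf
  have hmean : ∫ ϖ, (f ∘ X 0) ϖ ∂μ = ∫ ω, f ω ∂P := by
    rw [← hlaw 0, integral_map (hmeas 0).aemeasurable hf.aestronglyMeasurable]
    rfl
  filter_upwards [strong_law_ae_real (fun k => f ∘ X k) hint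
    (fun i j hij => (hindep.indepFun hij).comp hf hf) hident] with ϖ hϖ
  rw [← hmean]
  exact hϖ.congr fun n => by rw [empiricalMean, one_div_mul_eq_div]; rfl

theorem abs_integral_sub_le {f c h : E → ℝ} (hf : AEStronglyMeasurable f P)
    (hc : Integrable c P) (hh : Integrable h P) (hfch : ∀ᵐ ω ∂P, |f ω - c ω| ≤ h ω) :
    |∫ ω, f ω ∂P - ∫ ω, c ω ∂P| ≤ ∫ ω, h ω ∂P := by
  have hfc : Integrable (f - c) P :=
    hh.mono' (hf.sub hc.aestronglyMeasurable)
      (by simpa only [Pi.sub_apply, Real.norm_eq_abs] using hfch)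
  have hfi : Integrable f P := by simpa using hfc.add hc
  rw [← integral_sub hfi hc]
  exact abs_integral_le_integral_abs.trans (integral_mono_ae hfc.abs hh hfch)

theorem abs_empiricalMean_sub_integral_le_of_bracket {S : Set E} {f c h : E → ℝ}
    (hf : AEStronglyMeasurable f P) (hc : Integrable c P) (hh : Integrable h P)
    (hPS : ∀ᵐ ω ∂P, ω ∈ S) (hfch : ∀ ω ∈ S, |f ω - c ω| ≤ h ω) {ξ : ℕ → E}
    (hξ : ∀ k, ξ k ∈ S) (n : ℕ) :
    |empiricalMean f ξ n - ∫ ω, f ω ∂P| ≤ 2 * ∫ ω, h ω ∂P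
      + |empiricalMean h ξ n - ∫ ω, h ω ∂P| + |empiricalMean c ξ n - ∫ ω, c ω ∂P| := by
  have hemp := abs_empiricalMean_sub_le (fun k => hfch _ (hξ k)) n
  have hint := abs_integral_sub_le hf hc hh (hPS.mono hfch)
  linarith [abs_sub_le (empiricalMean f ξ n) (empiricalMean c ξ n) (∫ ω, f ω ∂P),
    abs_sub_le (empiricalMean c ξ n) (∫ ω, c ω ∂P) (∫ ω, f ω ∂P),
    abs_sub_comm (∫ ω, c ω ∂P) (∫ ω, f ω ∂P), le_abs_self (empiricalMean h ξ n - ∫ ω, h ω ∂P)]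

theorem tendsto_iSup_abs_empiricalMean_sub_integral {T : Type*} {f : T → E → ℝ}
    (hf : ∀ t, Measurable (f t)) {S : Set E} (hPS : ∀ᵐ ω ∂P, ω ∈ S)
    {B : ℕ → Finset ((E → ℝ) × (E → ℝ))}
    (hB : ∀ m : ℕ, IsBracketCover P S f (1 / (m + 1)) (B m))
    {ξ : ℕ → E} (hξ : ∀ k, ξ k ∈ S)
    (hconv : ∀ m, ∀ b ∈ B m, Tendsto (empiricalMean b.1 ξ) atTop (𝓝 (∫ ω, b.1 ω ∂P)) ∧
      Tendsto (empiricalMean b.2 ξ) atTop (𝓝 (∫ ω, b.2 ω ∂P))) :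
    Tendsto (fun n => ⨆ t, |empiricalMean (f t) ξ n - ∫ ω, f t ω ∂P|) atTop (𝓝 0) := by
  have hsmall : ∀ m : ℕ, ∀ᶠ n in atTop,
      ⨆ t, |empiricalMean (f t) ξ n - ∫ ω, f t ω ∂P| ≤ 4 * (1 / (m + 1)) := by
    intro m
    have hε : (0 : ℝ) < 1 / (m + 1) := Nat.one_div_pos_of_nat
    have hev : ∀ᶠ n in atTop, ∀ b ∈ B m,
        dist (empiricalMean b.1 ξ n) (∫ ω, b.1 ω ∂P) < 1 / (m + 1) ∧
          dist (empiricalMean b.2 ξ n) (∫ ω, b.2 ω ∂P) < 1 / (m + 1) :=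
      (eventually_all_finset _).2 fun b hb =>
        (Metric.tendsto_nhds.1 (hconv m b hb).1 _ hε).and
          (Metric.tendsto_nhds.1 (hconv m b hb).2 _ hε)
    filter_upwards [hev] with n hn
    refine Real.iSup_le (fun t => ?_) (by positivity)
    obtain ⟨b, hb, hbt⟩ := (hB m).2 t
    obtain ⟨-, -, hc, hh, hwidth⟩ := (hB m).1 b hb
    have hbound := abs_empiricalMean_sub_integral_le_of_bracket (hf t).aestronglyMeasurable
      hc hh hPS hbt hξ n
    obtain ⟨hcn, hhn⟩ := hn b hb
    rw [Real.dist_eq] at hcn hhn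
    linarith
  refine tendsto_order.2 ⟨fun a ha => Eventually.of_forall fun n =>
    ha.trans_le (Real.iSup_nonneg fun t => abs_nonneg _), fun a ha => ?_⟩
  obtain ⟨m, hm⟩ := exists_nat_one_div_lt (div_pos ha four_pos)
  filter_upwards [hsmall m] with n hn
  linarith

theorem ae_tendsto_iSup_abs_empiricalMean_sub_integral {Ω : Type*} [MeasurableSpace Ω]
    {μ : Measure Ω} {X : ℕ → Ω → E} (hmeas : ∀ n, Measurable (X n)) (hindep : iIndepFun X μ)
    (hlaw : ∀ n, μ.map (X n) = P) {T : Type*} {f : T → E → ℝ} (hf : ∀ t, Measurable (f t))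
    {S : Set E} (hS : MeasurableSet S) (hPS : ∀ᵐ ω ∂P, ω ∈ S)
    (hcover : ∀ ε > 0, ∃ B, IsBracketCover P S f ε B) :
    ∀ᵐ ϖ ∂μ, Tendsto (fun n => ⨆ t, |empiricalMean (f t) (fun k => X k ϖ) n
      - ∫ ω, f t ω ∂P|) atTop (𝓝 0) := by
  choose B hB using fun m : ℕ => hcover (1 / (m + 1)) Nat.one_div_pos_of_nat
  have hXS : ∀ᵐ ϖ ∂μ, ∀ k, X k ϖ ∈ S := ae_all_iff.2 fun k =>
    (ae_map_iff (hmeas k).aemeasurable hS).1 (by rwa [hlaw])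
  have hconv : ∀ᵐ ϖ ∂μ, ∀ m, ∀ b ∈ B m,
      Tendsto (empiricalMean b.1 fun k => X k ϖ) atTop (𝓝 (∫ ω, b.1 ω ∂P)) ∧
        Tendsto (empiricalMean b.2 fun k => X k ϖ) atTop (𝓝 (∫ ω, b.2 ω ∂P)) := by
    refine ae_all_iff.2 fun m => (ae_ball_iff (B m).countable_toSet).2 fun b hb => ?_
    obtain ⟨hc, hh, hci, hhi, -⟩ := (hB m).1 b hb
    exact (ae_tendsto_empiricalMean hmeas hindep hlaw hc hci).and
      (ae_tendsto_empiricalMean hmeas hindep hlaw hh hhi)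
  filter_upwards [hXS, hconv] with ϖ hϖS hϖconv
  exact tendsto_iSup_abs_empiricalMean_sub_integral hf hPS hB hϖS hϖconv

end UniformLaw

section NearBisector

def nearBisector {α ι : Type*} [PseudoMetricSpace α] (y : ι → α) (t : ℝ) : Set α :=
  {ω | ∃ i j, i ≠ j ∧ |dist (y i) ω - dist (y j) ω| ≤ t}

variable {α ι : Type*} [PseudoMetricSpace α]

theorem nearBisector_mono (y : ι → α) {t t' : ℝ} (h : t ≤ t') :
    nearBisector y t ⊆ nearBisector y t' :=
  fun _ ⟨i, j, hij, hle⟩ => ⟨i, j, hij, hle.trans h⟩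

theorem nearBisector_subset_of_dist_le {y z : ι → α} {r : ℝ} (h : ∀ i, dist (y i) (z i) ≤ r)
    (t : ℝ) : nearBisector y t ⊆ nearBisector z (t + 2 * r) := by
  rintro ω ⟨i, j, hij, hle⟩
  refine ⟨i, j, hij, ?_⟩
  have hi := (abs_dist_sub_le (z i) (y i) ω).trans ((dist_comm _ _).trans_le (h i))
  have hj := (abs_dist_sub_le (z j) (y j) ω).trans ((dist_comm _ _).trans_le (h j))
  rw [abs_le] at *
  constructor <;> linarith

theorem measurableSet_nearBisector [MeasurableSpace α] [OpensMeasurableSpace α] [Countable ι]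
    (y : ι → α) (t : ℝ) : MeasurableSet (nearBisector y t) := by
  simp only [nearBisector, Set.ofPred_exists, Set.ofPred_and]
  exact .iUnion fun i => .iUnion fun j =>
    (MeasurableSet.const _).inter (measurableSet_le (by fun_prop) measurable_const)

variable {E : Type*} [NormedAddCommGroup E] [InnerProductSpace ℝ E] [FiniteDimensional ℝ E]
  [MeasurableSpace E] [BorelSpace E] {P ν : Measure E} [IsFiniteMeasure P] [ν.IsAddHaarMeasure]

theorem tendsto_measure_abs_dist_sub_dist_le (hP : P ≪ ν) {a b : E} (hab : a ≠ b) :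
    Tendsto (fun t => P {ω | |dist a ω - dist b ω| ≤ t}) (𝓝[>] 0) (𝓝 0) := by
  have hlim := tendsto_measure_biInter_gt (μ := P) (a := (0 : ℝ))
    (s := fun t => {ω | |dist a ω - dist b ω| ≤ t})
    (fun t _ => (measurableSet_le (by fun_prop) measurable_const).nullMeasurableSet)
    (fun t t' _ htt' ω hω => le_trans hω htt') ⟨1, one_pos, measure_ne_top _ _⟩
  have hbisector : (⋂ t > (0 : ℝ), {ω : E | |dist a ω - dist b ω| ≤ t}) ⊆
      (AffineSubspace.perpBisector a b : Set E) := by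
    intro ω hω
    simp only [Set.mem_iInter, Set.mem_ofPred_eq] at hω
    rw [SetLike.mem_coe, AffineSubspace.mem_perpBisector_iff_dist_eq', ← sub_eq_zero,
      ← abs_nonpos_iff]
    exact le_of_forall_pos_le_add fun ε hε => by simpa using hω ε hε
  have hnull : P (AffineSubspace.perpBisector a b) = 0 :=
    hP (Measure.addHaar_affineSubspace ν _ (by simpa using hab))
  rwa [measure_mono_null hbisector hnull] at hlim

theorem tendsto_measure_nearBisector [Fintype ι] (hP : P ≪ ν) {y : ι → E}
    (hy : Function.Injective y) : Tendsto (fun t => P (nearBisector y t)) (𝓝[>] 0) (𝓝 0) := by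
  classical
  have hsum : Tendsto (fun t => ∑ p ∈ univ.offDiag, P {ω | |dist (y p.1) ω - dist (y p.2) ω| ≤ t})
      (𝓝[>] 0) (𝓝 0) := by
    simpa using tendsto_finsetSum _ fun p hp =>
      tendsto_measure_abs_dist_sub_dist_le hP (hy.ne (mem_offDiag.1 hp).2.2)
  refine tendsto_of_tendsto_of_tendsto_of_le_of_le tendsto_const_nhds hsum (fun _ => bot_le)
    fun t => (measure_mono ?_).trans (measure_biUnion_finset_le _ _)
  rintro ω ⟨i, j, hij, hle⟩
  exact Set.mem_biUnion (x := (i, j)) (mem_offDiag.2 ⟨mem_univ i, mem_univ j, hij⟩) hle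

theorem eventually_forall_measure_nearBisector_le [Fintype ι] (hP : P ≪ ν)
    {K : Set (ι → E)} (hK : IsCompact K) (hinj : ∀ y ∈ K, Function.Injective y)
    {ε : ℝ≥0∞} (hε : 0 < ε) : ∀ᶠ t in 𝓝[>] 0, ∀ y ∈ K, P (nearBisector y t) ≤ ε := by
  refine Eventually.filter_mono nhdsWithin_le_nhds
    (hK.eventually_forall_of_forall_eventually fun y hy => ?_)
  obtain ⟨t, hPt, ht : 0 < t⟩ := (((tendsto_measure_nearBisector hP (hinj y hy)).eventually_lt_const
    hε).and self_mem_nhdsWithin).exists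
  have hr : 0 < t / 3 := by positivity
  filter_upwards [Metric.ball_mem_nhds ((0 : ℝ), y) hr] with ⟨s, z⟩ hsz
  rw [Metric.mem_ball, Prod.dist_eq, max_lt_iff, Real.dist_eq, sub_zero] at hsz
  refine (measure_mono ((nearBisector_subset_of_dist_le
    (fun i => (dist_le_pi_dist z y i).trans hsz.2.le) s).trans (nearBisector_mono y ?_))).trans
    hPt.le
  linarith [le_abs_self s]

end NearBisector

section Voronoi

variable {d : ℕ}

theorem isClosed_cube : IsClosed (cube d) := by
  simp only [cube, Set.ofPred_forall]
  exact isClosed_iInter fun i => isClosed_Icc.preimage (EuclideanSpace.proj i).continuous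

theorem norm_sub_sq_le_of_mem_cube {a b : Eu d} (ha : a ∈ cube d) (hb : b ∈ cube d) :
    ‖a - b‖ ^ 2 ≤ d := by
  rw [EuclideanSpace.real_norm_sq_eq]
  calc ∑ i, (a - b) i ^ 2 ≤ ∑ _i : Fin d, (1 : ℝ) := sum_le_sum fun i _ => by
        obtain ⟨ha0, ha1⟩ := ha i
        obtain ⟨hb0, hb1⟩ := hb i
        simp only [PiLp.sub_apply]
        nlinarith
    _ = d := by simp

theorem norm_sub_le_sqrt_of_mem_cube {a b : Eu d} (ha : a ∈ cube d) (hb : b ∈ cube d) :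
    ‖a - b‖ ≤ √d :=
  Real.le_sqrt_of_sq_le (norm_sub_sq_le_of_mem_cube ha hb)

theorem isCompact_cube : IsCompact (cube d) := by
  have h0 : (0 : Eu d) ∈ cube d := fun i => by simp
  refine Metric.isCompact_of_isClosed_isBounded isClosed_cube
    ((Metric.isBounded_iff_subset_closedBall 0).2 ⟨√d, fun ω hω => ?_⟩)
  simpa [Metric.mem_closedBall, dist_eq_norm] using norm_sub_le_sqrt_of_mem_cube hω h0

variable {ι : Type*}

theorem isCompact_sep [Finite ι] (δ : ℝ) : IsCompact (sep δ : Set (ι → Eu d)) := by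
  refine (isCompact_univ_pi fun _ => isCompact_cube).of_isClosed_subset ?_
    fun x hx => Set.mem_univ_pi.2 hx.1
  simp only [sep, Set.ofPred_and, Set.ofPred_forall]
  exact (isClosed_iInter fun i => (isClosed_cube (d := d)).preimage (continuous_apply i)).inter
    (isClosed_iInter fun i => isClosed_iInter fun j => isClosed_iInter fun _ =>
      isClosed_le continuous_const ((continuous_apply i).dist (continuous_apply j)))

theorem injective_of_mem_sep {δ : ℝ} (hδ : 0 < δ) {x : ι → Eu d} (hx : x ∈ sep δ) :
    Function.Injective x := fun i j hij => by
  by_contra hne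
  have := hx.2 i j hne
  rw [hij, dist_self] at this
  linarith

variable [Fintype ι] [LinearOrder ι] [Nonempty ι]

theorem vIndex_eq_iff (x : ι → Eu d) (ω : Eu d) (i : ι) :
    vIndex x ω = i ↔ (∀ j, dist (x i) ω ≤ dist (x j) ω) ∧
      ∀ k < i, ¬∀ j, dist (x k) ω ≤ dist (x j) ω := by
  rw [vIndex, min'_eq_iff]
  simp only [mem_filter, mem_univ, true_and]
  refine and_congr_right fun _ => ⟨fun h k hk hk' => (h k hk').not_gt hk, fun h k hk => ?_⟩
  by_contra hlt
  exact h k (not_le.1 hlt) hk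

theorem dist_vIndex_le (x : ι → Eu d) (ω : Eu d) (j : ι) :
    dist (x (vIndex x ω)) ω ≤ dist (x j) ω :=
  ((vIndex_eq_iff x ω _).1 rfl).1 j

theorem vIndex_eq_of_forall_dist_lt {x : ι → Eu d} {ω : Eu d} {i : ι}
    (h : ∀ j ≠ i, dist (x i) ω < dist (x j) ω) : vIndex x ω = i := by
  by_contra hne
  exact (h _ hne).not_ge (dist_vIndex_le x ω i)

theorem measurableSet_vIndex_eq (x : ι → Eu d) (i : ι) :
    MeasurableSet {ω | vIndex x ω = i} := by
  have hmin : ∀ k, MeasurableSet {ω : Eu d | ∀ j, dist (x k) ω ≤ dist (x j) ω} := fun k => by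
    simp only [Set.ofPred_forall]
    exact .iInter fun j => measurableSet_le (by fun_prop) (by fun_prop)
  have hsplit : {ω | vIndex x ω = i} = {ω | ∀ j, dist (x i) ω ≤ dist (x j) ω} ∩
      ⋂ k, ⋂ (_ : k < i), {ω | ∀ j, dist (x k) ω ≤ dist (x j) ω}ᶜ := by
    ext ω
    simp only [vIndex_eq_iff, Set.mem_inter_iff, Set.mem_iInter, Set.mem_compl_iff,
      Set.mem_ofPred_eq]
  rw [hsplit]
  exact (hmin i).inter (.iInter fun k => .iInter fun _ => (hmin k).compl)

theorem measurable_gfun (Λ : ι → ι → ℝ) (x : ι → Eu d) : Measurable (gfun Λ x) := by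
  have hsplit : gfun Λ x = fun ω => ∑ i, {ω | vIndex x ω = i}.indicator
      (fun ω => ∑ j, Λ i j * ‖x j - ω‖ ^ 2) ω := by
    ext ω
    simp [gfun, Set.indicator_apply]
  rw [hsplit]
  exact Finset.measurable_sum _ fun i _ =>
    (Measurable.indicator (by fun_prop) (measurableSet_vIndex_eq x i))

theorem vIndex_eq_of_notMem_nearBisector {x y : ι → Eu d} {η t : ℝ}
    (hxy : ∀ i, dist (x i) (y i) ≤ η) (ht : 2 * η ≤ t) {ω : Eu d}
    (hω : ω ∉ nearBisector y t) : vIndex x ω = vIndex y ω := by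
  refine vIndex_eq_of_forall_dist_lt fun j hj => ?_
  have hgap : t < |dist (y j) ω - dist (y (vIndex y ω)) ω| :=
    not_le.1 fun hle => hω ⟨j, _, hj, hle⟩
  rw [abs_of_nonneg (sub_nonneg.2 (dist_vIndex_le y ω j))] at hgap
  have hi := (abs_le.1 ((abs_dist_sub_le _ _ ω).trans (hxy (vIndex y ω)))).2
  have hj := (abs_le.1 ((abs_dist_sub_le _ _ ω).trans (hxy j))).1
  linarith

variable {Λ : ι → ι → ℝ}

theorem abs_gfun_le (hΛ : ∀ i j, |Λ i j| ≤ 1) {x : ι → Eu d} (hx : ∀ i, x i ∈ cube d)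
    {ω : Eu d} (hω : ω ∈ cube d) : |gfun Λ x ω| ≤ Fintype.card ι * d := by
  calc |gfun Λ x ω| ≤ ∑ j, |Λ (vIndex x ω) j * ‖x j - ω‖ ^ 2| := abs_sum_le_sum_abs _ _
    _ = ∑ j, |Λ (vIndex x ω) j| * ‖x j - ω‖ ^ 2 := by simp only [abs_mul, abs_pow, abs_norm]
    _ ≤ ∑ _j : ι, (d : ℝ) := sum_le_sum fun j _ => by
        nlinarith [hΛ (vIndex x ω) j, norm_sub_sq_le_of_mem_cube (hx j) hω,
          abs_nonneg (Λ (vIndex x ω) j), sq_nonneg ‖x j - ω‖]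
    _ = Fintype.card ι * d := by simp

theorem abs_norm_sub_sq_sub_norm_sub_sq_le {a b ω : Eu d} (ha : a ∈ cube d) (hb : b ∈ cube d)
    (hω : ω ∈ cube d) : |‖a - ω‖ ^ 2 - ‖b - ω‖ ^ 2| ≤ 2 * √d * dist a b := by
  have hdiff : |‖a - ω‖ - ‖b - ω‖| ≤ dist a b := by
    simpa [dist_eq_norm] using abs_norm_sub_norm_le (a - ω) (b - ω)
  rw [sq_sub_sq, abs_mul, abs_of_nonneg (by positivity)]
  have ha' := norm_sub_le_sqrt_of_mem_cube ha hω
  have hb' := norm_sub_le_sqrt_of_mem_cube hb hω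
  exact mul_le_mul (by linarith) hdiff (abs_nonneg _) (by positivity)

theorem abs_gfun_sub_gfun_le (hΛ : ∀ i j, |Λ i j| ≤ 1) {x y : ι → Eu d}
    (hx : ∀ i, x i ∈ cube d) (hy : ∀ i, y i ∈ cube d) {η t : ℝ} (hη : 0 ≤ η)
    (hxy : ∀ i, dist (x i) (y i) ≤ η) (ht : 2 * η ≤ t) {ω : Eu d} (hω : ω ∈ cube d) :
    |gfun Λ x ω - gfun Λ y ω| ≤ 2 * √d * η * Fintype.card ι
      + 2 * Fintype.card ι * d * (nearBisector y t).indicator 1 ω := by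
  by_cases hbis : ω ∈ nearBisector y t
  · have : 0 ≤ 2 * √d * η * Fintype.card ι := by positivity
    rw [Set.indicator_of_mem hbis, Pi.one_apply]
    linarith [abs_sub (gfun Λ x ω) (gfun Λ y ω), abs_gfun_le hΛ hx hω, abs_gfun_le hΛ hy hω]
  rw [Set.indicator_of_notMem hbis, mul_zero, add_zero, gfun, gfun,
    vIndex_eq_of_notMem_nearBisector hxy ht hbis, ← sum_sub_distrib]
  calc |∑ j, (Λ (vIndex y ω) j * ‖x j - ω‖ ^ 2 - Λ (vIndex y ω) j * ‖y j - ω‖ ^ 2)|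
      ≤ ∑ j, |Λ (vIndex y ω) j * ‖x j - ω‖ ^ 2 - Λ (vIndex y ω) j * ‖y j - ω‖ ^ 2| :=
        abs_sum_le_sum_abs _ _
    _ = ∑ j, |Λ (vIndex y ω) j| * |‖x j - ω‖ ^ 2 - ‖y j - ω‖ ^ 2| := by
        simp only [← mul_sub, abs_mul]
    _ ≤ ∑ _j : ι, 2 * √d * η := sum_le_sum fun j _ => by
        have := (abs_norm_sub_sq_sub_norm_sub_sq_le (hx j) (hy j) hω).trans
          (mul_le_mul_of_nonneg_left (hxy j) (by positivity))
        nlinarith [hΛ (vIndex y ω) j, abs_nonneg (Λ (vIndex y ω) j),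
          abs_nonneg (‖x j - ω‖ ^ 2 - ‖y j - ω‖ ^ 2)]
    _ = 2 * √d * η * Fintype.card ι := by simp [mul_comm]

end Voronoi

theorem integral_const_add_mul_indicator_one {E : Type*} [MeasurableSpace E] {P : Measure E}
    [IsProbabilityMeasure P] (a K : ℝ) {s : Set E} (hs : MeasurableSet s) :
    ∫ ω, a + K * s.indicator 1 ω ∂P = a + K * P.real s := by
  rw [integral_add (integrable_const _) (((integrable_const 1).indicator hs).const_mul _),
    integral_const, integral_const_mul, integral_indicator_one hs, probReal_univ, one_smul]

theorem exists_pos_forall_measureReal_nearBisector_le {d : ℕ} {ι : Type*} [Fintype ι]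
    {δ : ℝ} (hδ : 0 < δ) {P : Measure (Eu d)} [IsFiniteMeasure P] (hP : P ≪ volume)
    {ε : ℝ} (hε : 0 < ε) :
    ∃ t > 0, ∀ y ∈ (sep δ : Set (ι → Eu d)), P.real (nearBisector y t) ≤ ε := by
  obtain ⟨t, hPt, ht⟩ := ((eventually_forall_measure_nearBisector_le hP (isCompact_sep (ι := ι) δ)
    (fun y hy => injective_of_mem_sep hδ hy) (ENNReal.ofReal_pos.2 hε)).and
    self_mem_nhdsWithin).exists
  exact ⟨t, ht, fun y hy => ENNReal.toReal_le_of_le_ofReal hε.le (hPt y hy)⟩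

theorem exists_isBracketCover_gfun {d : ℕ} {ι : Type*} [Fintype ι] [LinearOrder ι] [Nonempty ι]
    {Λ : ι → ι → ℝ} (hΛ : ∀ i j, |Λ i j| ≤ 1) {δ : ℝ} (hδ : 0 < δ) {P : Measure (Eu d)}
    [IsProbabilityMeasure P] (hP : P ≪ volume) (hPcube : ∀ᵐ ω ∂P, ω ∈ cube d)
    {ε : ℝ} (hε : 0 < ε) :
    ∃ B, IsBracketCover P (cube d) (fun x : (sep δ : Set (ι → Eu d)) => gfun Λ x.1) ε B := by
  classical
  set C : ℝ := 2 * √d * Fintype.card ι + 2 * Fintype.card ι * d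
  set ε' := ε / (C + 1)
  have hε' : 0 < ε' := by positivity
  have hCε' : C * ε' ≤ ε := by
    rw [mul_div_assoc', div_le_iff₀ (by positivity)]
    nlinarith
  obtain ⟨t, ht, hPt⟩ := exists_pos_forall_measureReal_nearBisector_le (ι := ι) hδ hP hε'
  set η := min (t / 2) ε'
  have hη : 0 < η := by positivity
  obtain ⟨F, hFsep, hFcover⟩ := (isCompact_sep (ι := ι) (d := d) δ).elim_nhds_subcover
    (fun y => Metric.ball y η) fun y _ => Metric.ball_mem_nhds y hη
  refine ⟨F.image fun y => (gfun Λ y, fun ω => 2 * √d * η * Fintype.card ι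
      + 2 * Fintype.card ι * d * (nearBisector y t).indicator 1 ω), ?_, ?_⟩
  · simp only [mem_image, forall_exists_index, and_imp, forall_apply_eq_imp_iff₂]
    intro y hy
    have hbis := measurableSet_nearBisector y t
    refine ⟨measurable_gfun Λ y,
      measurable_const.add (measurable_const.mul (measurable_one.indicator hbis)),
      .of_bound (measurable_gfun Λ y).aestronglyMeasurable _
        (hPcube.mono fun ω hω => abs_gfun_le hΛ (hFsep y hy).1 hω),
      (integrable_const _).add (((integrable_const 1).indicator hbis).const_mul _), ?_⟩
    rw [integral_const_add_mul_indicator_one _ _ hbis]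
    calc _ ≤ 2 * √d * ε' * Fintype.card ι + 2 * Fintype.card ι * d * ε' := by
          gcongr
          exacts [min_le_right _ _, hPt y (hFsep y hy)]
      _ = C * ε' := by ring
      _ ≤ ε := hCε'
  · rintro ⟨x, hx⟩
    obtain ⟨y, hyF, hxy⟩ := Set.mem_iUnion₂.1 (hFcover hx)
    refine exists_mem_image.2 ⟨y, hyF, fun ω hω => ?_⟩
    exact abs_gfun_sub_gfun_le hΛ hx.1 (hFsep y hyF).1 hη.le
      (fun i => (dist_le_pi_dist x y i).trans (Metric.mem_ball.1 hxy).le)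
      (by linarith [min_le_left (t / 2) ε']) hω

theorem stmt11_general {d : ℕ} {ι : Type*} [Fintype ι] [LinearOrder ι] [Nonempty ι]
    (Λ : ι → ι → ℝ) (hΛmem : ∀ i j, Λ i j ∈ Set.Icc (0:ℝ) 1)
    (δ B : ℝ) (hδ : 0 < δ)
    (P : Measure (Eu d)) [IsProbabilityMeasure P] (hPcube : P (cube d) = 1)
    (hPB : ∀ s : Set (Eu d), MeasurableSet s →
      P s ≤ ENNReal.ofReal B * volume s)
    {Ω : Type*} [MeasurableSpace Ω] (μ : Measure Ω)
    (X : ℕ → Ω → Eu d) (hmeas : ∀ n, Measurable (X n))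
    (hindep : iIndepFun X μ)
    (hlaw : ∀ n, Measure.map (X n) μ = P) :
    ∀ᵐ ϖ ∂μ,
      Tendsto (fun n : ℕ =>
          ⨆ x : (sep δ : Set (ι → Eu d)),
            |(1 / (n:ℝ)) * ∑ k ∈ Finset.range n, gfun Λ x.1 (X k ϖ)
              - ∫ ω, gfun Λ x.1 ω ∂P|)
        atTop (nhds 0) := by
  have hΛ : ∀ i j, |Λ i j| ≤ 1 := fun i j => abs_le.2 ⟨by linarith [(hΛmem i j).1], (hΛmem i j).2⟩
  have hcube : ∀ᵐ ω ∂P, ω ∈ cube d :=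
    (ae_mem_iff_measure_eq isClosed_cube.measurableSet.nullMeasurableSet).2
      (by rw [hPcube, measure_univ])
  have hP : P ≪ volume := Measure.AbsolutelyContinuous.mk fun s hs hs0 =>
    le_antisymm ((hPB s hs).trans_eq (by rw [hs0, mul_zero])) bot_le
  exact ae_tendsto_iSup_abs_empiricalMean_sub_integral hmeas hindep hlaw
    (fun x => measurable_gfun Λ x.1) isClosed_cube.measurableSet hcube
    fun ε hε => exists_isBracketCover_gfun hΛ hδ hP hcube hε

theorem stmt11 {d : ℕ} {ι : Type*} [Fintype ι] [LinearOrder ι] [Nonempty ι]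
    (Λ : ι → ι → ℝ) (hΛmem : ∀ i j, Λ i j ∈ Set.Icc (0:ℝ) 1)
    (hΛsymm : ∀ i j, Λ i j = Λ j i) (hΛ0 : ∀ i, Λ i i = 1)
    (δ B : ℝ) (hδ : 0 < δ) (hB : 0 < B)
    (P : Measure (Eu d)) [IsProbabilityMeasure P] (hPcube : P (cube d) = 1)
    (hPB : ∀ s : Set (Eu d), MeasurableSet s →
      P s ≤ ENNReal.ofReal B * volume s)
    {Ω : Type*} [MeasurableSpace Ω] (μ : Measure Ω) [IsProbabilityMeasure μ]
    (X : ℕ → Ω → Eu d) (hmeas : ∀ n, Measurable (X n))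
    (hindep : iIndepFun X μ)
    (hlaw : ∀ n, Measure.map (X n) μ = P) :
    ∀ᵐ ϖ ∂μ,
      Tendsto (fun n : ℕ =>
          ⨆ x : (sep δ : Set (ι → Eu d)),
            |(1 / (n:ℝ)) * ∑ k ∈ Finset.range n, gfun Λ x.1 (X k ϖ)
              - ∫ ω, gfun Λ x.1 ω ∂P|)
        atTop (nhds 0) :=
  stmt11_general Λ hΛmem δ B hδ P hPcube hPB μ X hmeas hindep hlaw
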